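/- Let A be a finite nonempty alphabet, σ a bijection on A with σ^l = id_A for some integer l ≥ 1, and v = (v(n))_{n≥1} a sequence in A such that v(2n+1) = σ(v(n)) for all n ≥ 1. Then K₂(v) = {σ^j(v) : 0 ≤ j < l} ∪ ⋃_{j=0}^{l-1} σ^j(K₂(T₀v)), where (T₀v)(n) = v(2n) and σ^j acts pointwise on sequences. In particular, if T₀v has a finite 2-kernel, then v has a finite 2-kernel. -/

import Mathlib

/-!
Write `v_{i,j} = (v(2^i n + j))_{n ≥ 1}`, so that `K₂(v) = {v_{i,j} : j < 2^i}` and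
`(v_{i,j})_{i',j'} = v_{i+i', 2^i j' + j}`. Since `T₀v = v_{1,0}` and `σ ∘ v = T₁v = v_{1,1}`,
splitting on the parity of `j` gives `v_{i+1,2j} = (T₀v)_{i,j}` and `v_{i+1,2j+1} = σ ∘ v_{i,j}`;
by induction on `i` every kernel element is `σ^a ∘ v` or `σ^a ∘ w` with `w ∈ K₂(T₀v)`.
Conversely `σ^a ∘ v = v_{a, 2^a - 1}`, so `σ^a ∘ v ∈ K₂(v)`, and then
`σ^a ∘ K₂(T₀v) = K₂(T₀(σ^a ∘ v)) ⊆ K₂(v)` because kernels of kernel elements are sub-kernels.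
As `σ^l = 1`, the exponent `a` may be taken modulo `l`.
-/

/-- The operator taking a sequence `v = (v(n))_{n ≥ 1}` to the sequence `n ↦ v (2n)`. -/
def T0 {A : Type*} (v : ℕ+ → A) : ℕ+ → A := fun n => v (2 * n)

/-- The 2-kernel of a sequence `v = (v(n))_{n ≥ 1}`:
the set of sequences `(v (2^i n + j))_{n ≥ 1}` with `0 ≤ j < 2^i`. -/
def kernel2 {A : Type*} (v : ℕ+ → A) : Set (ℕ+ → A) :=
  {w | ∃ i j : ℕ, j < 2 ^ i ∧
    w = fun n : ℕ+ => v ⟨2 ^ i * n.val + j,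
      Nat.add_pos_left (Nat.mul_pos (pow_pos (by norm_num) i) n.pos) j⟩}

section KernelSeq

variable {A B : Type*}

def kernelSeq (v : ℕ+ → A) (i j : ℕ) : ℕ+ → A :=
  fun n => v ⟨2 ^ i * n + j, by positivity⟩

lemma mem_kernel2_iff {v w : ℕ+ → A} :
    w ∈ kernel2 v ↔ ∃ i j : ℕ, j < 2 ^ i ∧ w = kernelSeq v i j := Iff.rfl

@[simp]
lemma kernelSeq_zero_zero (v : ℕ+ → A) : kernelSeq v 0 0 = v :=
  funext fun n => congrArg v (PNat.eq (by simp))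

lemma kernelSeq_kernelSeq (v : ℕ+ → A) (i j i' j' : ℕ) :
    kernelSeq (kernelSeq v i j) i' j' = kernelSeq v (i + i') (2 ^ i * j' + j) :=
  funext fun n => congrArg v (PNat.eq (by simp; ring))

lemma T0_eq_kernelSeq (v : ℕ+ → A) : T0 v = kernelSeq v 1 0 :=
  funext fun n => congrArg v (PNat.eq (by simp))

lemma comp_kernelSeq (f : A → B) (v : ℕ+ → A) (i j : ℕ) :
    f ∘ kernelSeq v i j = kernelSeq (f ∘ v) i j := rfl

lemma two_pow_mul_add_lt {i j i' j' : ℕ} (hj : j < 2 ^ i) (hj' : j' < 2 ^ i') :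
    2 ^ i * j' + j < 2 ^ (i + i') :=
  calc 2 ^ i * j' + j < 2 ^ i * (j' + 1) := by linarith
    _ ≤ 2 ^ i * 2 ^ i' := Nat.mul_le_mul_left _ hj'
    _ = 2 ^ (i + i') := (pow_add 2 i i').symm

lemma kernel2_subset_of_mem {v w : ℕ+ → A} (hw : w ∈ kernel2 v) : kernel2 w ⊆ kernel2 v := by
  rintro _ ⟨i', j', hj', rfl⟩
  obtain ⟨i, j, hj, rfl⟩ := hw
  exact ⟨i + i', 2 ^ i * j' + j, two_pow_mul_add_lt hj hj', kernelSeq_kernelSeq v i j i' j'⟩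

lemma T0_mem_kernel2 (v : ℕ+ → A) : T0 v ∈ kernel2 v :=
  ⟨1, 0, by norm_num, T0_eq_kernelSeq v⟩

lemma comp_mem_kernel2_comp (f : A → B) {v w : ℕ+ → A} (hw : w ∈ kernel2 v) :
    f ∘ w ∈ kernel2 (f ∘ v) := by
  obtain ⟨i, j, hj, rfl⟩ := hw
  exact ⟨i, j, hj, comp_kernelSeq f v i j⟩

end KernelSeq

section Twisted

variable {A : Type*} {σ : Equiv.Perm A} {v : ℕ+ → A}

lemma comp_eq_kernelSeq_one_one (hv : ∀ n : ℕ+, v (2 * n + 1) = σ (v n)) :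
    σ ∘ v = kernelSeq v 1 1 :=
  funext fun n => (hv n).symm.trans (congrArg v (PNat.eq (by simp)))

lemma pow_comp_eq_kernelSeq (hv : ∀ n : ℕ+, v (2 * n + 1) = σ (v n)) (a : ℕ) :
    ⇑(σ ^ a) ∘ v = kernelSeq v a (2 ^ a - 1) := by
  induction a with
  | zero => simp
  | succ a ih =>
    calc ⇑(σ ^ (a + 1)) ∘ v = ⇑(σ ^ a) ∘ (σ ∘ v) := by rw [pow_succ, Equiv.Perm.coe_mul]; rfl
      _ = kernelSeq (⇑(σ ^ a) ∘ v) 1 1 := by rw [comp_eq_kernelSeq_one_one hv]; rfl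
      _ = kernelSeq v (a + 1) (2 ^ (a + 1) - 1) := by
        rw [ih, kernelSeq_kernelSeq, pow_succ]
        congr 1
        have := Nat.one_le_two_pow (n := a)
        omega

lemma pow_comp_mem_kernel2 (hv : ∀ n : ℕ+, v (2 * n + 1) = σ (v n)) (a : ℕ) :
    ⇑(σ ^ a) ∘ v ∈ kernel2 v :=
  ⟨a, 2 ^ a - 1, Nat.sub_lt (Nat.two_pow_pos a) one_pos, pow_comp_eq_kernelSeq hv a⟩

lemma pow_comp_mem_kernel2_of_mem_kernel2_T0 (hv : ∀ n : ℕ+, v (2 * n + 1) = σ (v n))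
    (a : ℕ) {w : ℕ+ → A} (hw : w ∈ kernel2 (T0 v)) : ⇑(σ ^ a) ∘ w ∈ kernel2 v :=
  kernel2_subset_of_mem (pow_comp_mem_kernel2 hv a) <|
    kernel2_subset_of_mem (T0_mem_kernel2 _) (comp_mem_kernel2_comp _ hw)

lemma kernelSeq_eq_pow_comp (hv : ∀ n : ℕ+, v (2 * n + 1) = σ (v n)) {i j : ℕ}
    (hj : j < 2 ^ i) :
    (∃ a, kernelSeq v i j = ⇑(σ ^ a) ∘ v) ∨
      ∃ a, ∃ w ∈ kernel2 (T0 v), kernelSeq v i j = ⇑(σ ^ a) ∘ w := by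
  induction i generalizing j with
  | zero => exact .inl ⟨0, by rw [Nat.lt_one_iff.mp hj]; simp⟩
  | succ i ih =>
    obtain ⟨j, rfl | rfl⟩ := Nat.even_or_odd' j
    · refine .inr ⟨0, kernelSeq (T0 v) i j, ⟨i, j, by omega, rfl⟩, ?_⟩
      rw [T0_eq_kernelSeq, kernelSeq_kernelSeq, add_comm i]
      simp
    · have hodd : kernelSeq v (i + 1) (2 * j + 1) = σ ∘ kernelSeq v i j := by
        rw [comp_kernelSeq, comp_eq_kernelSeq_one_one hv, kernelSeq_kernelSeq, add_comm 1]
        simp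
      have hσ_comp (a : ℕ) (w : ℕ+ → A) : σ ∘ (⇑(σ ^ a) ∘ w) = ⇑(σ ^ (a + 1)) ∘ w := by
        rw [pow_succ', Equiv.Perm.coe_mul]; rfl
      rcases ih (j := j) (by omega) with ⟨a, ha⟩ | ⟨a, w, hw, ha⟩
      · exact .inl ⟨a + 1, by rw [hodd, ha, hσ_comp]⟩
      · exact .inr ⟨a + 1, w, hw, by rw [hodd, ha, hσ_comp]⟩

lemma kernel2_eq_of_pow_eq_one (hv : ∀ n : ℕ+, v (2 * n + 1) = σ (v n)) {l : ℕ} (hl : 1 ≤ l)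
    (hσ : σ ^ l = 1) :
    kernel2 v =
      {w | ∃ j < l, w = fun n => (σ ^ j) (v n)} ∪
        (⋃ j < l, (fun w : ℕ+ → A => fun n => (σ ^ j) (w n)) '' kernel2 (T0 v)) := by
  ext w
  constructor
  · intro hw
    obtain ⟨i, j, hj, rfl⟩ := mem_kernel2_iff.mp hw
    rcases kernelSeq_eq_pow_comp hv hj with ⟨a, ha⟩ | ⟨a, u, hu, ha⟩
    · exact .inl ⟨a % l, Nat.mod_lt a hl, by rw [ha, pow_eq_pow_mod a hσ]; rfl⟩
    · exact .inr <| Set.mem_biUnion (Nat.mod_lt a hl)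
        ⟨u, hu, by rw [ha, pow_eq_pow_mod a hσ]; rfl⟩
  · rintro (⟨a, -, rfl⟩ | hw)
    · exact pow_comp_mem_kernel2 hv a
    · obtain ⟨a, -, u, hu, rfl⟩ := Set.mem_iUnion₂.mp hw
      exact pow_comp_mem_kernel2_of_mem_kernel2_T0 hv a hu

end Twisted

theorem stmt4_general {A : Type*} (σ : Equiv.Perm A)
    (l : ℕ) (hl : 1 ≤ l) (hσ : σ ^ l = 1) (v : ℕ+ → A)
    (hv : ∀ n : ℕ+, v (2 * n + 1) = σ (v n)) :
    kernel2 v =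
      {w | ∃ j < l, w = fun n => (σ ^ j) (v n)} ∪
        (⋃ j < l, (fun w : ℕ+ → A => fun n => (σ ^ j) (w n)) '' kernel2 (T0 v)) ∧
    ((kernel2 (T0 v)).Finite → (kernel2 v).Finite) := by
  have heq := kernel2_eq_of_pow_eq_one hv hl hσ
  refine ⟨heq, fun hfin => heq ▸ .union ?_ (.biUnion (Set.finite_Iio l) fun j _ => hfin.image _)⟩
  refine ((Set.finite_Iio l).image fun j n => (σ ^ j) (v n)).subset ?_
  rintro _ ⟨j, hj, rfl⟩
  exact ⟨j, hj, rfl⟩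

theorem stmt4 {A : Type*} [Finite A] [Nonempty A] (σ : Equiv.Perm A)
    (l : ℕ) (hl : 1 ≤ l) (hσ : σ ^ l = 1) (v : ℕ+ → A)
    (hv : ∀ n : ℕ+, v (2 * n + 1) = σ (v n)) :
    kernel2 v =
      {w | ∃ j < l, w = fun n => (σ ^ j) (v n)} ∪
        (⋃ j < l, (fun w : ℕ+ → A => fun n => (σ ^ j) (w n)) '' kernel2 (T0 v)) ∧
    ((kernel2 (T0 v)).Finite → (kernel2 v).Finite) :=
  stmt4_general σ l hl hσ v hv
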